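/- arXiv:0708.4230 — 2 statements merged into one kernel-verified Lean document; each statement's English description precedes it below -/
import Mathlib

section
/- The image of the K-algebra homomorphism θ : K[X₁,X₂,X₃,X₄] → K[s,u,t,v] sending X₁,X₂,X₃,X₄ to st, sv, ut, uv respectively equals the subalgebra generated by the monomials of bidegree (1,1), and K[X₂,X₃,X₄] ∩ ker(θ) = 0. -/
open MvPolynomial

/-!
Over the fraction field, the substitution `s ↦ u / v, u ↦ 1, t ↦ t, v ↦ v` undoes `θ` on
`K[X₂, X₃, X₄]`: it sends `sv ↦ u`, `ut ↦ t`, `uv ↦ v`. Hence `θ` is injective there.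
-/

theorem MvPolynomial.injOn_supported_of_comp_eq {R σ A B : Type*} [CommSemiring R]
    [Semiring A] [Algebra R A] [Semiring B] [Algebra R B]
    (f : MvPolynomial σ R →ₐ[R] A) (g : A →ₐ[R] B) (ι : MvPolynomial σ R →ₐ[R] B)
    (hι : Function.Injective ι) {s : Set σ} (h : ∀ i ∈ s, g (f (X i)) = ι (X i)) :
    Set.InjOn f (supported R s) := by
  have hcomp : Set.EqOn (g.comp f) ι (supported R s) := by
    rw [supported_eq_adjoin_X, AlgHom.eqOn_adjoin_iff]
    rintro _ ⟨i, hi, rfl⟩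
    exact h i hi
  intro P hP Q hQ hPQ
  apply hι
  rw [← hcomp hP, ← hcomp hQ, AlgHom.comp_apply, AlgHom.comp_apply, hPQ]

/-- In `K[s,u,t,v] = MvPolynomial (Fin 4) K` we use s = X 0, u = X 1, t = X 2, v = X 3;
θ sends X₁,X₂,X₃,X₄ to st, sv, ut, uv. Its image is the subalgebra generated by the
bidegree (1,1) monomials st, sv, ut, uv, and K[X₂,X₃,X₄] ∩ ker θ = 0. -/
theorem segre_image_and_no_kernel_in_three_vars (K : Type*) [Field K] :
    (MvPolynomial.aeval
        ![(X 0 : MvPolynomial (Fin 4) K) * X 2, X 0 * X 3, X 1 * X 2, X 1 * X 3] :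
        MvPolynomial (Fin 4) K →ₐ[K] MvPolynomial (Fin 4) K).range =
      Algebra.adjoin K ({X 0 * X 2, X 0 * X 3, X 1 * X 2, X 1 * X 3} :
        Set (MvPolynomial (Fin 4) K)) ∧
    ∀ P ∈ MvPolynomial.supported K ({1, 2, 3} : Set (Fin 4)),
      MvPolynomial.aeval
        ![(X 0 : MvPolynomial (Fin 4) K) * X 2, X 0 * X 3, X 1 * X 2, X 1 * X 3] P = 0 →
      P = 0 := by
  refine ⟨?_, fun P hP hθ => ?_⟩
  · rw [← Algebra.adjoin_range_eq_range_aeval]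
    simp only [Matrix.range_cons, Matrix.range_empty, Set.union_empty, Set.singleton_union]
  · let F := FractionRing (MvPolynomial (Fin 4) K)
    let ι : MvPolynomial (Fin 4) K →ₐ[K] F := IsScalarTower.toAlgHom K _ F
    have hι : Function.Injective ι := IsFractionRing.injective _ F
    have hv : ι (X 3) ≠ 0 := (map_ne_zero_iff ι hι).2 (X_ne_zero 3)
    refine MvPolynomial.injOn_supported_of_comp_eq _
      (aeval ![ι (X 1) / ι (X 3), 1, ι (X 2), ι (X 3)]) ι hι ?_ hP (zero_mem _)
      (by rw [hθ, map_zero])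
    rintro i (rfl | rfl | rfl) <;> simp [div_mul_cancel₀ _ hv]
end

section
/- Let R be a commutative ring and α : R^m → R^n an R-linear map with m ≥ n. Then ann_R(coker α)^n ⊆ I_n(α) ⊆ ann_R(coker α), where I_n(α) is the ideal generated by the n×n minors of a matrix of α. -/
/-!
If `a₁, …, aₙ` annihilate the cokernel of `M`, then each `aᵢ eᵢ` lies in the image of `M`, so
`diag(a) = M X` for some matrix `X`; by the Cauchy–Binet expansion `∏ aᵢ = det (M X)` is a linear
combination of maximal minors of `M`. Conversely, a maximal minor is `det (M P)` for a matrix `P`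
selecting columns, and the adjugate gives `det (M P) • v = M (P (adj (M P) v))`, so it kills the
cokernel.
-/

theorem Ideal.pow_le_of_forall_prod_mem {R : Type*} [CommRing R] {I J : Ideal R} {k : ℕ}
    (h : ∀ a : Fin k → R, (∀ i, a i ∈ I) → ∏ i, a i ∈ J) : I ^ k ≤ J := by
  rw [Submodule.pow_eq_span_pow_set, Submodule.span_le]
  rintro _ hx
  obtain ⟨a, rfl⟩ := Set.mem_pow.mp hx
  simpa [List.prod_ofFn] using h (fun i => a i) fun i => (a i).2

namespace Matrix

theorem exists_mul_eq_diagonal_of_mem_annihilator {R ι κ : Type*} [CommRing R] [DecidableEq ι]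
    [Fintype κ] (M : Matrix ι κ R) (a : ι → R)
    (ha : ∀ i, a i ∈ Module.annihilator R ((ι → R) ⧸ LinearMap.range M.mulVecLin)) :
    ∃ X : Matrix κ ι R, M * X = diagonal a := by
  have hcol : ∀ i, Pi.single i (a i) ∈ LinearMap.range M.mulVecLin := fun i => by
    have := Module.mem_annihilator.mp (ha i) (Submodule.Quotient.mk (Pi.single i 1))
    rwa [← Submodule.Quotient.mk_smul, Submodule.Quotient.mk_eq_zero, ← Pi.single_smul',
      smul_eq_mul, mul_one] at this
  choose x hx using hcol
  refine ⟨(of x)ᵀ, ?_⟩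
  ext i j
  rw [← col_apply (diagonal a), col_diagonal, ← hx j]
  rfl

variable {R ι κ : Type*} [CommRing R] [Fintype ι] [DecidableEq ι]

/-- The ideal `Iₙ(M)` generated by the maximal minors of a wide matrix `M`. -/
def maxMinorsIdeal (M : Matrix ι κ R) : Ideal R :=
  Ideal.span {d | ∃ g : ι ↪ κ, d = (M.submatrix id g).det}

theorem det_submatrix_mem_maxMinorsIdeal (M : Matrix ι κ R) (f : ι → κ) :
    (M.submatrix id f).det ∈ M.maxMinorsIdeal := by
  by_cases hf : f.Injective
  · exact Ideal.subset_span ⟨⟨f, hf⟩, rfl⟩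
  · obtain ⟨i, j, hij, hne⟩ : ∃ i j, f i = f j ∧ i ≠ j := by
      simpa [Function.Injective] using hf
    rw [det_zero_of_column_eq hne (by simp [hij])]
    exact zero_mem _

theorem det_smul_mem_range_mulVecLin (A : Matrix ι ι R) (v : ι → R) :
    A.det • v ∈ LinearMap.range A.mulVecLin :=
  ⟨A.adjugate *ᵥ v, by simp [mulVec_mulVec, mul_adjugate, smul_mulVec]⟩

variable [Fintype κ]

theorem det_mul_eq_sum_det_submatrix (M : Matrix ι κ R) (X : Matrix κ ι R) :
    (M * X).det = ∑ f : ι → κ, (∏ i, X (f i) i) * (M.submatrix id f).det := by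
  simp only [det_apply, mul_apply, Finset.prod_univ_sum, Finset.mul_sum, Finset.smul_sum,
    Fintype.piFinset_univ, submatrix_apply, id]
  rw [Finset.sum_comm]
  refine Finset.sum_congr rfl fun f _ => Finset.sum_congr rfl fun σ _ => ?_
  rw [Finset.prod_mul_distrib, mul_comm (∏ i, X (f i) i), smul_mul_assoc]

theorem det_mul_mem_maxMinorsIdeal (M : Matrix ι κ R) (X : Matrix κ ι R) :
    (M * X).det ∈ M.maxMinorsIdeal := by
  rw [det_mul_eq_sum_det_submatrix]
  exact Ideal.sum_mem _ fun f _ => Ideal.mul_mem_left _ _ (det_submatrix_mem_maxMinorsIdeal M f)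

theorem det_mul_mem_annihilator (M : Matrix ι κ R) (P : Matrix κ ι R) :
    (M * P).det ∈ Module.annihilator R ((ι → R) ⧸ LinearMap.range M.mulVecLin) := by
  refine Module.mem_annihilator.mpr fun z => ?_
  obtain ⟨v, rfl⟩ := Submodule.Quotient.mk_surjective _ z
  rw [← Submodule.Quotient.mk_smul, Submodule.Quotient.mk_eq_zero]
  refine LinearMap.range_comp_le_range P.mulVecLin M.mulVecLin ?_
  rw [← mulVecLin_mul]
  exact det_smul_mem_range_mulVecLin _ v

theorem maxMinorsIdeal_le_annihilator (M : Matrix ι κ R) :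
    M.maxMinorsIdeal ≤ Module.annihilator R ((ι → R) ⧸ LinearMap.range M.mulVecLin) := by
  classical
  rw [maxMinorsIdeal, Ideal.span_le]
  rintro _ ⟨g, rfl⟩
  have hsel : M.submatrix id g = M * (1 : Matrix κ κ R).submatrix id g := by
    ext i j
    simp [mul_apply, one_apply]
  rw [SetLike.mem_coe, hsel]
  exact det_mul_mem_annihilator M _

theorem annihilator_pow_card_le_maxMinorsIdeal (M : Matrix ι κ R) :
    Module.annihilator R ((ι → R) ⧸ LinearMap.range M.mulVecLin) ^ Fintype.card ι ≤
      M.maxMinorsIdeal := by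
  refine Ideal.pow_le_of_forall_prod_mem fun a ha => ?_
  obtain ⟨X, hX⟩ :=
    exists_mul_eq_diagonal_of_mem_annihilator M (a ∘ Fintype.equivFin ι) fun i => ha _
  have hprod : ∏ i, a i = (M * X).det := by
    rw [hX, det_diagonal]
    exact ((Fintype.equivFin ι).prod_comp a).symm
  rw [hprod]
  exact det_mul_mem_maxMinorsIdeal M X

end Matrix

theorem fitting_ideal_bounds_general (R : Type*) [CommRing R] (m n : ℕ)
    (M : Matrix (Fin n) (Fin m) R) :
    let α : (Fin m → R) →ₗ[R] (Fin n → R) := Matrix.mulVecLin M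
    let ann : Ideal R := Module.annihilator R ((Fin n → R) ⧸ LinearMap.range α)
    let minors : Ideal R :=
      Ideal.span { d : R | ∃ g : Fin n ↪ Fin m, d = (M.submatrix id g).det }
    ann ^ n ≤ minors ∧ minors ≤ ann := by
  intro α ann minors
  have hpow := M.annihilator_pow_card_le_maxMinorsIdeal
  rw [Fintype.card_fin] at hpow
  exact ⟨hpow, M.maxMinorsIdeal_le_annihilator⟩

/-- Let α : R^m → R^n (m ≥ n) be given by a matrix M.  Then
ann(coker α)^n ⊆ I_n(α) ⊆ ann(coker α), where I_n(α) is the ideal generated by the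
n×n minors of M (determinants of the submatrices obtained by choosing n of the m
columns). -/
theorem fitting_ideal_bounds (R : Type*) [CommRing R] (m n : ℕ) (hmn : n ≤ m)
    (M : Matrix (Fin n) (Fin m) R) :
    let α : (Fin m → R) →ₗ[R] (Fin n → R) := Matrix.mulVecLin M
    let ann : Ideal R := Module.annihilator R ((Fin n → R) ⧸ LinearMap.range α)
    let minors : Ideal R :=
      Ideal.span { d : R | ∃ g : Fin n ↪ Fin m, d = (M.submatrix id g).det }
    ann ^ n ≤ minors ∧ minors ≤ ann :=
  fitting_ideal_bounds_general R m n M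
end
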